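/- arXiv:2306.17599 — 8 statements merged into one kernel-verified Lean document; each statement's English description precedes it below -/
import Mathlib

section
/- In the polynomial ring R[X], where R = F_q[x_1,…,x_n], the polynomial f_n(X) divides Δ_n(X). -/
/-!
Evaluating `Δ_n` at `X = Σ kᵢ xᵢ` gives the Moore determinant of `(x₁, …, xₙ, Σ kᵢ xᵢ)`.
Since `y ↦ y ^ q ^ r` is `F_q`-linear, its last column is the combination of the others with
coefficients `kᵢ`, so it vanishes. The `q ^ n` linear forms are pairwise distinct because the
`xᵢ` are linearly independent, and over the domain `R` a product of `X - a` over distinct roots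
`a` divides the polynomial.
-/

open Polynomial

theorem Polynomial.prod_X_sub_C_dvd_of_injOn_of_isRoot {R ι : Type*} [CommRing R] [IsDomain R]
    {p : R[X]} {s : Finset ι} {f : ι → R} (hf : Set.InjOn f s)
    (hroot : ∀ i ∈ s, p.IsRoot (f i)) :
    ∏ i ∈ s, (X - C (f i)) ∣ p := by
  rcases eq_or_ne p 0 with rfl | hp
  · exact dvd_zero _
  have hnodup : (s.val.map f).Nodup := s.nodup.map_on fun i hi j hj h => hf hi hj h
  have hprod : ∏ i ∈ s, (X - C (f i)) = ((s.val.map f).map fun a => X - C a).prod := by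
    rw [Multiset.map_map]; rfl
  rw [hprod, Multiset.prod_X_sub_C_dvd_iff_le_roots hp, Multiset.le_iff_subset hnodup]
  intro a ha
  obtain ⟨i, hi, rfl⟩ := Multiset.mem_map.mp ha
  exact (mem_roots hp).mpr (hroot i hi)

def mooreMatrix {A : Type*} [CommRing A] {n : ℕ} (q : ℕ) (v : Fin n → A) :
    Matrix (Fin n) (Fin n) A :=
  Matrix.of fun r c => v c ^ q ^ (r : ℕ)

theorem RingHom.map_mooreMatrix {A B : Type*} [CommRing A] [CommRing B] {n : ℕ} (f : A →+* B)
    (q : ℕ) (v : Fin n → A) : (mooreMatrix q v).map f = mooreMatrix q (f ∘ v) := by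
  ext r c
  simp [mooreMatrix]

section FiniteField

variable {K A : Type*} [Field K] [Fintype K] [CommRing A] [Algebra K A]

theorem FiniteField.frobeniusAlgHom_pow_apply (r : ℕ) (a : A) :
    (FiniteField.frobeniusAlgHom K A ^ r) a = a ^ Fintype.card K ^ r := by
  rw [AlgHom.coe_pow, FiniteField.coe_frobeniusAlgHom, pow_iterate]

variable [IsDomain A]

theorem det_mooreMatrix_eq_zero_of_sum_smul_eq_zero {n : ℕ} {v : Fin n → A}
    {c : Fin n → K} (hc : c ≠ 0) (h : ∑ i, c i • v i = 0) :
    (mooreMatrix (Fintype.card K) v).det = 0 := by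
  refine Matrix.exists_mulVec_eq_zero_iff.mp ⟨algebraMap K A ∘ c, ?_, ?_⟩
  · exact fun h0 => hc ((FaithfulSMul.algebraMap_injective K A).comp_left (h0.trans (by simp)))
  · ext r
    simp only [Matrix.mulVec, dotProduct, mooreMatrix, Matrix.of_apply, Function.comp_apply,
      Pi.zero_apply]
    rw [← map_zero (FiniteField.frobeniusAlgHom K A ^ (r : ℕ)), ← h, map_sum]
    refine Finset.sum_congr rfl fun i _ => ?_
    rw [AlgHom.map_smul_of_tower, FiniteField.frobeniusAlgHom_pow_apply, Algebra.smul_def,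
      mul_comm]

theorem det_mooreMatrix_snoc_sum_smul_eq_zero {n : ℕ} (v : Fin n → A) (k : Fin n → K) :
    (mooreMatrix (Fintype.card K) (Fin.snoc v (∑ i, k i • v i) : Fin (n + 1) → A)).det = 0 := by
  refine det_mooreMatrix_eq_zero_of_sum_smul_eq_zero (c := Fin.snoc k (-1)) ?_ ?_
  · exact fun h => by simpa using congrFun h (Fin.last n)
  · simp [Fin.sum_univ_castSucc]

theorem prod_X_sub_C_sum_smul_dvd_det_mooreMatrix {n : ℕ} {v : Fin n → A}
    (hv : LinearIndependent K v) :
    ∏ k : Fin n → K, (X - C (∑ i, k i • v i)) ∣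
      (mooreMatrix (Fintype.card K) (Fin.snoc (C ∘ v) X : Fin (n + 1) → A[X])).det := by
  refine prod_X_sub_C_dvd_of_injOn_of_isRoot ?_ fun k _ => ?_
  · exact (linearIndependent_iff_injective_fintypeLinearCombination.mp hv).injOn
  · have heval : evalRingHom (∑ i, k i • v i) ∘ (Fin.snoc (C ∘ v) X : Fin (n + 1) → A[X]) =
        Fin.snoc v (∑ i, k i • v i) := by
      funext c
      induction c using Fin.lastCases <;> simp
    rw [IsRoot, ← coe_evalRingHom, RingHom.map_det, RingHom.mapMatrix_apply,
      RingHom.map_mooreMatrix, heval]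
    exact det_mooreMatrix_snoc_sum_smul_eq_zero v k

end FiniteField

theorem f_dvd_Delta_general (p m n : ℕ) [Fact p.Prime] [Fintype (GaloisField p m)] (hm : 1 ≤ m) :
    (∏ k : Fin n → GaloisField p m,
        (Polynomial.X -
          Polynomial.C (∑ i, MvPolynomial.C (k i) * MvPolynomial.X i))) ∣
      Matrix.det (Matrix.of fun r c : Fin (n + 1) =>
        if h : (c : ℕ) < n then
          Polynomial.C
            ((MvPolynomial.X ⟨(c : ℕ), h⟩ : MvPolynomial (Fin n) (GaloisField p m)) ^
              (p ^ m) ^ (r : ℕ))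
        else
          (Polynomial.X : Polynomial (MvPolynomial (Fin n) (GaloisField p m))) ^
            (p ^ m) ^ (r : ℕ)) := by
  have hcard : Fintype.card (GaloisField p m) = p ^ m := by
    rw [← Nat.card_eq_fintype_card, GaloisField.card p m (by omega)]
  have hΔ := prod_X_sub_C_sum_smul_dvd_det_mooreMatrix
    (MvPolynomial.linearIndependent_X (R := GaloisField p m) (σ := Fin n))
  simp only [MvPolynomial.smul_eq_C_mul, hcard] at hΔ
  convert hΔ using 3
  ext r c
  induction c using Fin.lastCases <;> simp [mooreMatrix]

/-- In `R[X]`, where `R = F_q[x_1,…,x_n]` with `q = p^m`, the polynomial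
`f_n(X) = ∏_{k ∈ F_q^n} (X - Σ k_i x_i)` divides the determinant `Δ_n(X)` of the
`(n+1)×(n+1)` matrix whose `(r,c)` entry is `x_c^{q^r}` for `c ≤ n` and `X^{q^r}`
for the last column. -/
theorem f_dvd_Delta (p m n : ℕ) [Fact p.Prime] [Fintype (GaloisField p m)] (hm : 1 ≤ m) (hn : 1 ≤ n) :
    (∏ k : Fin n → GaloisField p m,
        (Polynomial.X -
          Polynomial.C (∑ i, MvPolynomial.C (k i) * MvPolynomial.X i))) ∣
      Matrix.det (Matrix.of fun r c : Fin (n + 1) =>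
        if h : (c : ℕ) < n then
          Polynomial.C
            ((MvPolynomial.X ⟨(c : ℕ), h⟩ : MvPolynomial (Fin n) (GaloisField p m)) ^
              (p ^ m) ^ (r : ℕ))
        else
          (Polynomial.X : Polynomial (MvPolynomial (Fin n) (GaloisField p m))) ^
            (p ^ m) ^ (r : ℕ)) :=
  f_dvd_Delta_general p m n hm
end

section
/- In the polynomial ring R[X], where R = F_q[x_1,…,x_n], one has the identity Δ_n(X) = Δ_{n,n} · f_n(X). -/
/-!
`Δ_n(X)` is the Moore determinant of `(x_1, …, x_n, X)`, a polynomial in `X` of degree at most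
`q ^ n` whose coefficient of `X ^ q ^ n` is `Δ_{n,n}` (Laplace expansion along the last column).
Since `x ↦ x ^ q` is `F_q`-linear, substituting `X = Σ kᵢ xᵢ` makes the last column an
`F_q`-combination of the others, so the `q ^ n` distinct elements `Σ kᵢ xᵢ` are roots of `Δ_n`
and the monic `f_n` divides it; comparing degrees and top coefficients gives `Δ_n = Δ_{n,n} f_n`.
-/

open Polynomial

lemma Polynomial.prod_X_sub_C_dvd_of_isRoot {R ι : Type*} [CommRing R] [IsDomain R] [Fintype ι]
    {a : ι → R} (ha : Function.Injective a) {P : R[X]} (hP : ∀ i, P.IsRoot (a i)) :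
    ∏ i, (X - C (a i)) ∣ P := by
  rcases eq_or_ne P 0 with rfl | hP0
  · exact dvd_zero _
  have hle : Finset.univ.val.map a ≤ P.roots :=
    (Multiset.le_iff_subset (Finset.univ.nodup.map ha)).2 fun x hx => by
      obtain ⟨i, -, rfl⟩ := Multiset.mem_map.1 hx
      exact (mem_roots hP0).2 (hP i)
  have := (Multiset.prod_X_sub_C_dvd_iff_le_roots hP0 _).2 hle
  rwa [Multiset.map_map] at this

lemma Polynomial.eq_C_coeff_mul_of_monic_of_dvd {R : Type*} [CommSemiring R] {P f : R[X]}
    (hf : f.Monic) (hdvd : f ∣ P) (hdeg : P.natDegree ≤ f.natDegree) :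
    P = C (P.coeff f.natDegree) * f := by
  have h := eq_leadingCoeff_mul_of_monic_of_dvd_of_natDegree_le hf hdvd hdeg
  have hlc : P.coeff f.natDegree = P.leadingCoeff := by
    rw [congrArg (coeff · f.natDegree) h, coeff_C_mul, hf.coeff_natDegree, mul_one]
  rwa [hlc]

lemma FiniteField.sum_smul_pow_card_pow {K R ι : Type*} [Field K] [Fintype K] [CommRing R]
    [Algebra K R] (s : Finset ι) (k : ι → K) (v : ι → R) (r : ℕ) :
    (∑ i ∈ s, k i • v i) ^ Fintype.card K ^ r = ∑ i ∈ s, k i • v i ^ Fintype.card K ^ r := by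
  have hfrob (x : R) : (frobeniusAlgHom K R ^ r) x = x ^ Fintype.card K ^ r := by
    induction r with
    | zero => simp
    | succ r ih => rw [pow_succ', AlgHom.mul_apply, ih, frobeniusAlgHom_apply, ← pow_mul, pow_succ]
  simp only [← hfrob, map_sum, map_smul]

namespace Matrix

def mooreMatrix {M : Type*} [Monoid M] {n : ℕ} (q : ℕ) (v : Fin n → M) :
    Matrix (Fin n) (Fin n) M :=
  of fun r c => v c ^ q ^ (r : ℕ)

lemma map_mooreMatrix {M N F : Type*} [Monoid M] [Monoid N] [FunLike F M N] [MonoidHomClass F M N]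
    {n : ℕ} (f : F) (q : ℕ) (v : Fin n → M) :
    (mooreMatrix q v).map f = mooreMatrix q (f ∘ v) := by
  ext r c
  simp [mooreMatrix]

section FiniteField

variable {K R : Type*} [Field K] [Fintype K] [CommRing R] [Algebra K R] {n : ℕ}

lemma det_mooreMatrix_snoc_sum_smul (v : Fin n → R) (k : Fin n → K) :
    (mooreMatrix (Fintype.card K) (Fin.snoc v (∑ i, k i • v i))).det = 0 := by
  set M := mooreMatrix (Fintype.card K) (Fin.snoc v (∑ i, k i • v i))
  -- the last column is `∑ c j • (column j)`, and its own coefficient `c (last n)` is `0`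
  let c : Fin (n + 1) → R := Fin.snoc (fun i => algebraMap K R (k i)) 0
  have hcol : M.updateCol (Fin.last n) (fun r => ∑ j, c j • M r j) = M := by
    ext r j
    refine Fin.lastCases ?_ (fun i => ?_) j
    · simp only [M, c, mooreMatrix, updateCol_self, of_apply, Fin.sum_univ_castSucc,
        Fin.snoc_castSucc, Fin.snoc_last, smul_eq_mul, zero_mul, add_zero, ← Algebra.smul_def,
        FiniteField.sum_smul_pow_card_pow]
    · simp
  simpa [c] using (congrArg det hcol).symm.trans (det_updateCol_sum M (Fin.last n) c)

end FiniteField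

section SnocX

variable {R : Type*} [CommRing R] {n q : ℕ}

lemma eval_det_mooreMatrix_snoc_X (v : Fin n → R) (y : R) :
    (mooreMatrix q (Fin.snoc (C ∘ v) X : Fin (n + 1) → R[X])).det.eval y =
      (mooreMatrix q (Fin.snoc v y)).det := by
  rw [← coe_evalRingHom, RingHom.map_det, RingHom.mapMatrix_apply, map_mooreMatrix, Fin.comp_snoc,
    coe_evalRingHom, eval_X]
  congr
  ext i
  simp

lemma det_mooreMatrix_snoc_X_eq_sum (v : Fin n → R) :
    (mooreMatrix q (Fin.snoc (C ∘ v) X : Fin (n + 1) → R[X])).det =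
      ∑ i : Fin (n + 1), C ((-1) ^ ((i : ℕ) + n) *
        (of fun r s : Fin n => v s ^ q ^ (i.succAbove r : ℕ)).det) * X ^ q ^ (i : ℕ) := by
  rw [det_succ_column _ (Fin.last n)]
  refine Finset.sum_congr rfl fun i _ => ?_
  have hminor : (mooreMatrix q (Fin.snoc (C ∘ v) X : Fin (n + 1) → R[X])).submatrix
      i.succAbove (Fin.last n).succAbove =
        (C : R →+* R[X]).mapMatrix (of fun r s : Fin n => v s ^ q ^ (i.succAbove r : ℕ)) := by
    ext r s
    simp [mooreMatrix]
  rw [hminor, ← RingHom.map_det]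
  simp [mooreMatrix]


lemma natDegree_det_mooreMatrix_snoc_X_le (hq : 1 ≤ q) (v : Fin n → R) :
    (mooreMatrix q (Fin.snoc (C ∘ v) X : Fin (n + 1) → R[X])).det.natDegree ≤ q ^ n := by
  rw [det_mooreMatrix_snoc_X_eq_sum]
  refine natDegree_sum_le_of_forall_le _ _ fun i _ => (natDegree_C_mul_X_pow_le _ _).trans ?_
  exact Nat.pow_le_pow_right hq (Nat.le_of_lt_succ i.isLt)

lemma coeff_det_mooreMatrix_snoc_X (hq : 1 < q) (v : Fin n → R) :
    (mooreMatrix q (Fin.snoc (C ∘ v) X : Fin (n + 1) → R[X])).det.coeff (q ^ n) =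
      (mooreMatrix q v).det := by
  rw [det_mooreMatrix_snoc_X_eq_sum, finsetSum_coeff, Finset.sum_eq_single (Fin.last n)]
  · simp [mooreMatrix]
  · intro i _ hi
    rw [coeff_C_mul_X_pow, if_neg fun h => hi (Fin.ext (Nat.pow_right_injective hq h.symm))]
  · simp

end SnocX

variable {K R : Type*} [Field K] [Fintype K] [CommRing R] [IsDomain R] [Algebra K R] {n : ℕ}

theorem det_mooreMatrix_snoc_X {v : Fin n → R} (hv : LinearIndependent K v) :
    (mooreMatrix (Fintype.card K) (Fin.snoc (C ∘ v) X : Fin (n + 1) → R[X])).det =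
      C (mooreMatrix (Fintype.card K) v).det * ∏ k : Fin n → K, (X - C (∑ i, k i • v i)) := by
  have hq : 1 < Fintype.card K := Fintype.one_lt_card
  have hroot (k : Fin n → K) : (mooreMatrix (Fintype.card K)
      (Fin.snoc (C ∘ v) X : Fin (n + 1) → R[X])).det.IsRoot (∑ i, k i • v i) := by
    rw [IsRoot.def, eval_det_mooreMatrix_snoc_X, det_mooreMatrix_snoc_sum_smul]
  have hinj : Function.Injective fun k : Fin n → K => ∑ i, k i • v i := by
    simpa [Function.Injective, Fintype.linearCombination_apply] using
      hv.fintypeLinearCombination_injective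
  have hdeg : (∏ k : Fin n → K, (X - C (∑ i, k i • v i))).natDegree = Fintype.card K ^ n := by
    rw [natDegree_finsetProd_X_sub_C_eq_card, Finset.card_univ, Fintype.card_fun, Fintype.card_fin]
  rw [eq_C_coeff_mul_of_monic_of_dvd (monic_prod_X_sub_C _ _)
    (prod_X_sub_C_dvd_of_isRoot hinj hroot) (hdeg ▸ natDegree_det_mooreMatrix_snoc_X_le hq.le v),
    hdeg, coeff_det_mooreMatrix_snoc_X hq]

end Matrix

theorem Delta_eq_Delta_nn_mul_f_general (p m n : ℕ) [Fact p.Prime]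
    [Fintype (GaloisField p m)] (hm : 1 ≤ m) :
    Matrix.det (Matrix.of fun r c : Fin (n + 1) =>
        if h : (c : ℕ) < n then
          Polynomial.C
            ((MvPolynomial.X ⟨(c : ℕ), h⟩ : MvPolynomial (Fin n) (GaloisField p m)) ^
              (p ^ m) ^ (r : ℕ))
        else
          (Polynomial.X : Polynomial (MvPolynomial (Fin n) (GaloisField p m))) ^
            (p ^ m) ^ (r : ℕ)) =
      Polynomial.C
        (Matrix.det (Matrix.of fun r c : Fin n =>
          (MvPolynomial.X c : MvPolynomial (Fin n) (GaloisField p m)) ^ (p ^ m) ^ (r : ℕ))) *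
      ∏ k : Fin n → GaloisField p m,
        (Polynomial.X - Polynomial.C (∑ i, MvPolynomial.C (k i) * MvPolynomial.X i)) := by
  have hcard : Fintype.card (GaloisField p m) = p ^ m := by
    rw [← Nat.card_eq_fintype_card, GaloisField.card p m (by omega)]
  have hmatrix : (Matrix.of fun r c : Fin (n + 1) =>
      if h : (c : ℕ) < n then
        C ((MvPolynomial.X ⟨(c : ℕ), h⟩ : MvPolynomial (Fin n) (GaloisField p m)) ^
          (p ^ m) ^ (r : ℕ))
      else (X : (MvPolynomial (Fin n) (GaloisField p m))[X]) ^ (p ^ m) ^ (r : ℕ)) =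
      Matrix.mooreMatrix (p ^ m) (Fin.snoc (C ∘ MvPolynomial.X) X) := by
    ext r c
    refine Fin.lastCases ?_ (fun i => ?_) c <;> simp [Matrix.mooreMatrix]
  simp_rw [hmatrix, ← MvPolynomial.smul_eq_C_mul, ← hcard]
  exact Matrix.det_mooreMatrix_snoc_X (MvPolynomial.linearIndependent_X _ _)

/-- In `R[X]`, where `R = F_q[x_1,…,x_n]` with `q = p^m`, one has
`Δ_n(X) = Δ_{n,n} · f_n(X)`, where `Δ_n(X)` is the determinant of the `(n+1)×(n+1)`
matrix with `(r,c)` entry `x_c^{q^r}` (last column `X^{q^r}`), `Δ_{n,n}` is the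
determinant of the `n×n` matrix with `(r,c)` entry `x_c^{q^r}` for `0 ≤ r ≤ n-1`,
and `f_n(X) = ∏_{k ∈ F_q^n} (X - Σ k_i x_i)`. -/
theorem Delta_eq_Delta_nn_mul_f (p m n : ℕ) [Fact p.Prime]
    [Fintype (GaloisField p m)] (hm : 1 ≤ m) (hn : 1 ≤ n) :
    Matrix.det (Matrix.of fun r c : Fin (n + 1) =>
        if h : (c : ℕ) < n then
          Polynomial.C
            ((MvPolynomial.X ⟨(c : ℕ), h⟩ : MvPolynomial (Fin n) (GaloisField p m)) ^
              (p ^ m) ^ (r : ℕ))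
        else
          (Polynomial.X : Polynomial (MvPolynomial (Fin n) (GaloisField p m))) ^
            (p ^ m) ^ (r : ℕ)) =
      Polynomial.C
        (Matrix.det (Matrix.of fun r c : Fin n =>
          (MvPolynomial.X c : MvPolynomial (Fin n) (GaloisField p m)) ^ (p ^ m) ^ (r : ℕ))) *
      ∏ k : Fin n → GaloisField p m,
        (Polynomial.X - Polynomial.C (∑ i, MvPolynomial.C (k i) * MvPolynomial.X i)) :=
  Delta_eq_Delta_nn_mul_f_general p m n hm
end

section
/- The polynomial f_n(X) ∈ R[X] is monic of degree q^n in X, and for every natural number k that is not of the form q^i for some 0 ≤ i ≤ n, the coefficient of X^k in f_n(X) is zero. -/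
/-- `f_n(X) = ∏_{(k_1,…,k_n) ∈ F_q^n} (X − Σ_i k_i x_i) ∈ R[X]`, where
`R = F_q[x_1,…,x_n]` and `F_q = GaloisField p m`. -/
noncomputable def dicksonF (p m n : ℕ) [Fact p.Prime] [Fintype (GaloisField p m)] :
    Polynomial (MvPolynomial (Fin n) (GaloisField p m)) :=
  ∏ k : Fin n → GaloisField p m,
    (Polynomial.X - Polynomial.C (∑ i, MvPolynomial.C (k i) * MvPolynomial.X i))

/-! Splitting off the first coordinate, `f_{n+1}(X) = ∏_{c ∈ F_q} f_n(X - c x_1)`. If `f_n` is a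
`q`-polynomial `∑ a_i X^{q^i}`, it is `F_q`-linear, so the factors are `f_n(X) - c f_n(x_1)`, and
their product is `f_n(X)^q - f_n(x_1)^{q-1} f_n(X)`, again a `q`-polynomial. Being a product of
`q^n` monic linear factors, `f_n` is monic of degree `q^n`, so its monomials are the `X^{q^i}` with
`i ≤ n`. -/

open Polynomial

namespace FiniteField

variable {K : Type*} [Fintype K] {R : Type*} [CommRing R]

local notation "q" => Fintype.card K

variable (K R) in
noncomputable def linearizedPolynomials : Submodule R R[X] :=
  Submodule.span R (Set.range fun i : ℕ => X ^ q ^ i)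

theorem X_pow_card_pow_mem_linearizedPolynomials (i : ℕ) :
    (X ^ q ^ i : R[X]) ∈ linearizedPolynomials K R :=
  Submodule.subset_span ⟨i, rfl⟩

theorem coeff_eq_zero_of_mem_linearizedPolynomials {f : R[X]}
    (hf : f ∈ linearizedPolynomials K R) {k : ℕ} (hk : ∀ i, k ≠ q ^ i) : f.coeff k = 0 := by
  induction hf using Submodule.span_induction with
  | mem g hg =>
    obtain ⟨i, rfl⟩ := hg
    simp [coeff_X_pow, hk i]
  | zero => simp
  | add f g _ _ hf hg => simp [hf, hg]
  | smul r f _ hf => simp [hf]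

variable [Field K]

theorem prod_X_sub_C_eq_X_pow_card_sub_X : ∏ a : K, (X - C a) = X ^ q - X := by
  have hmonic : (X ^ q - X : K[X]).Monic :=
    monic_X_pow_sub (by rw [degree_X]; exact_mod_cast Fintype.one_lt_card)
  have hcard : Multiset.card (X ^ q - X : K[X]).roots = (X ^ q - X : K[X]).natDegree := by
    rw [roots_X_pow_card_sub_X, X_pow_card_sub_X_natDegree_eq K Fintype.one_lt_card]
    rfl
  rw [← prod_multiset_X_sub_C_of_monic_of_roots_card_eq hmonic hcard, roots_X_pow_card_sub_X]
  rfl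

-- Homogenize `∏ a, (X - a) = X ^ q - X` and substitute `(x, u)`.
theorem prod_sub_smul_eq {A : Type*} [CommRing A] [Algebra K A] (x u : A) :
    ∏ c : K, (x - c • u) = x ^ q - u ^ (q - 1) * x := by
  have hprod := homogenize_finsetProd (s := Finset.univ) (p := fun a : K => X - C a)
    (n := fun _ => 1) fun a _ => natDegree_X_sub_C_le a
  rw [Finset.sum_const, smul_eq_mul, mul_one, Finset.card_univ,
    prod_X_sub_C_eq_X_pow_card_sub_X] at hprod
  have := congrArg (MvPolynomial.aeval ![x, u]) hprod
  simpa [Fintype.one_lt_card.le, Fintype.card_ne_zero, Algebra.smul_def, mul_comm] using this.symm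

theorem sub_pow_card_pow {A : Type*} [CommRing A] [Algebra K A] (x y : A) (i : ℕ) :
    (x - y) ^ q ^ i = x ^ q ^ i - y ^ q ^ i := by
  induction i with
  | zero => simp
  | succ i ih =>
    rw [pow_succ, pow_mul, pow_mul, pow_mul, ih]
    exact map_sub (frobeniusAlgHom K A) _ _

variable [Algebra K R]

theorem pow_card_mem_linearizedPolynomials {f : R[X]} (hf : f ∈ linearizedPolynomials K R) :
    f ^ q ∈ linearizedPolynomials K R := by
  induction hf using Submodule.span_induction with
  | mem g hg =>
    obtain ⟨i, rfl⟩ := hg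
    rw [← pow_mul, ← pow_succ]
    exact X_pow_card_pow_mem_linearizedPolynomials (i + 1)
  | zero => simp
  | add f g _ _ hf hg =>
    rw [show (f + g) ^ q = f ^ q + g ^ q from map_add (frobeniusAlgHom K R[X]) f g]
    exact add_mem hf hg
  | smul r f _ hf =>
    rw [_root_.smul_pow]
    exact Submodule.smul_mem _ _ hf

theorem comp_X_sub_C_of_mem_linearizedPolynomials {f : R[X]}
    (hf : f ∈ linearizedPolynomials K R) (b : R) : f.comp (X - C b) = f - C (f.eval b) := by
  induction hf using Submodule.span_induction with
  | mem g hg =>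
    obtain ⟨i, rfl⟩ := hg
    simp [sub_pow_card_pow (K := K)]
  | zero => simp
  | add f g _ _ hf hg => rw [add_comp, hf, hg, eval_add, C_add]; ring
  | smul r f _ hf =>
    rw [smul_comp, hf, eval_smul, smul_sub, smul_eq_mul, C_mul, smul_eq_C_mul, smul_eq_C_mul]

theorem eval_smul_of_mem_linearizedPolynomials {f : R[X]}
    (hf : f ∈ linearizedPolynomials K R) (c : K) (b : R) : f.eval (c • b) = c • f.eval b := by
  induction hf using Submodule.span_induction with
  | mem g hg =>
    obtain ⟨i, rfl⟩ := hg
    simp [_root_.smul_pow, pow_card_pow]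
  | zero => simp
  | add f g _ _ hf hg => simp [hf, hg]
  | smul r f _ hf => simp [hf]

variable (K) in
noncomputable def subspacePolynomial {n : ℕ} (v : Fin n → R) : R[X] :=
  ∏ k : Fin n → K, (X - C (∑ i, k i • v i))

theorem subspacePolynomial_fin_zero (v : Fin 0 → R) : subspacePolynomial K v = X := by
  simp [subspacePolynomial]

theorem subspacePolynomial_fin_succ {n : ℕ} (v : Fin (n + 1) → R) :
    subspacePolynomial K v =
      ∏ c : K, (subspacePolynomial K (Fin.tail v)).comp (X - C (c • v 0)) := by
  rw [subspacePolynomial, ← (Fin.consEquiv fun _ => K).prod_comp, Fintype.prod_prod_type]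
  refine Finset.prod_congr rfl fun c _ => ?_
  simp [subspacePolynomial, prod_comp, Fin.sum_univ_succ, Fin.consEquiv, Fin.tail, sub_sub]

theorem subspacePolynomial_mem_linearizedPolynomials {n : ℕ} (v : Fin n → R) :
    subspacePolynomial K v ∈ linearizedPolynomials K R := by
  induction n with
  | zero =>
    rw [subspacePolynomial_fin_zero, ← pow_one X, ← pow_zero q]
    exact X_pow_card_pow_mem_linearizedPolynomials 0
  | succ n ih =>
    set G := subspacePolynomial K (Fin.tail v)
    have hG : G ∈ linearizedPolynomials K R := ih _
    have hfactor (c : K) : G.comp (X - C (c • v 0)) = G - c • C (G.eval (v 0)) := by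
      rw [comp_X_sub_C_of_mem_linearizedPolynomials hG,
        eval_smul_of_mem_linearizedPolynomials hG, smul_C]
    rw [subspacePolynomial_fin_succ, Finset.prod_congr rfl fun c _ => hfactor c,
      prod_sub_smul_eq, ← C_pow, C_mul']
    exact sub_mem (pow_card_mem_linearizedPolynomials hG) (Submodule.smul_mem _ _ hG)

theorem monic_subspacePolynomial {n : ℕ} (v : Fin n → R) : (subspacePolynomial K v).Monic :=
  monic_prod_of_monic _ _ fun _ _ => monic_X_sub_C _

theorem natDegree_subspacePolynomial [Nontrivial R] {n : ℕ} (v : Fin n → R) :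
    (subspacePolynomial K v).natDegree = q ^ n := by
  rw [subspacePolynomial, natDegree_prod_of_monic _ _ fun _ _ => monic_X_sub_C _]
  simp only [natDegree_X_sub_C, Finset.sum_const, Finset.card_univ, Fintype.card_fun,
    Fintype.card_fin, smul_eq_mul, mul_one]

theorem coeff_subspacePolynomial_eq_zero {n : ℕ} (v : Fin n → R) {k : ℕ}
    (hk : ¬ ∃ i ≤ n, k = q ^ i) : (subspacePolynomial K v).coeff k = 0 := by
  nontriviality R
  by_contra hne
  obtain ⟨i, rfl⟩ : ∃ i, k = q ^ i := by
    by_contra! hk'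
    exact hne (coeff_eq_zero_of_mem_linearizedPolynomials
      (subspacePolynomial_mem_linearizedPolynomials v) hk')
  have hle : q ^ i ≤ q ^ n :=
    natDegree_subspacePolynomial (K := K) v ▸ le_natDegree_of_ne_zero hne
  exact hk ⟨i, (Nat.pow_le_pow_iff_right Fintype.one_lt_card).mp hle, rfl⟩

end FiniteField

open FiniteField

theorem f_monic_degree_and_coeffs_general (p m n : ℕ) [Fact p.Prime]
    [Fintype (GaloisField p m)] (hm : 1 ≤ m) :
    (dicksonF p m n).Monic ∧ (dicksonF p m n).natDegree = (p ^ m) ^ n ∧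
      ∀ k : ℕ, (¬ ∃ i ≤ n, k = (p ^ m) ^ i) → (dicksonF p m n).coeff k = 0 := by
  have hcard : Fintype.card (GaloisField p m) = p ^ m := by
    rw [← Nat.card_eq_fintype_card]
    exact GaloisField.card p m (by omega)
  have hf : dicksonF p m n = subspacePolynomial (GaloisField p m) MvPolynomial.X := by
    simp only [dicksonF, subspacePolynomial, MvPolynomial.smul_eq_C_mul]
  rw [hf, ← hcard]
  exact ⟨monic_subspacePolynomial _, natDegree_subspacePolynomial _,
    fun k hk => coeff_subspacePolynomial_eq_zero _ hk⟩

/-- `f_n(X)` is monic of degree `q^n` in `X`, and for every natural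
number `k` not of the form `q^i` with `0 ≤ i ≤ n`, the coefficient of `X^k` in
`f_n(X)` is zero. -/
theorem f_monic_degree_and_coeffs (p m n : ℕ) [Fact p.Prime]
    [Fintype (GaloisField p m)] (hm : 1 ≤ m) (hn : 1 ≤ n) :
    (dicksonF p m n).Monic ∧ (dicksonF p m n).natDegree = (p ^ m) ^ n ∧
      ∀ k : ℕ, (¬ ∃ i ≤ n, k = (p ^ m) ^ i) → (dicksonF p m n).coeff k = 0 :=
  f_monic_degree_and_coeffs_general p m n hm
end

section
/- For every 0 ≤ i ≤ n, one has the identity Δ_{n,i} = Δ_{n,n} · C_{n,i} in R = F_q[x_1,…,x_n]. In particular, Δ_{n,n} divides Δ_{n,i} in R. -/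
/-- The Dickson invariant `C_{n,i} := (−1)^{n+i} · (coefficient of X^{q^i} in f_n(X))`. -/
noncomputable def dicksonC (p m n : ℕ) [Fact p.Prime] [Fintype (GaloisField p m)]
    (i : ℕ) : MvPolynomial (Fin n) (GaloisField p m) :=
  (-1) ^ (n + i) * (dicksonF p m n).coeff ((p ^ m) ^ i)

/-- `Δ_{n,i}`: the determinant of the `n×n` matrix with rows indexed by
`r ∈ {0,…,n} \ {i}` (in increasing order) and columns `c`, with entry `x_c^{q^r}`. -/
noncomputable def DeltaMinor (p m n : ℕ) [Fact p.Prime] (i : ℕ) :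
    MvPolynomial (Fin n) (GaloisField p m) :=
  Matrix.det (Matrix.of fun r c : Fin n =>
    (MvPolynomial.X c : MvPolynomial (Fin n) (GaloisField p m)) ^
      (p ^ m) ^ (if (r : ℕ) < i then (r : ℕ) else (r : ℕ) + 1))

/-!
Expanding the determinant `D(X) = det [X^{q^r} | x_c^{q^r}]_{0 ≤ r ≤ n}` along its first column
gives `D(X) = ∑ᵢ (-1)^i Δ_{n,i} X^{q^i}`, of degree at most `q^n`. Since `y ↦ y^{q^r}` is
`F_q`-linear, substituting a linear form `∑ k_c x_c` for `X` makes the first column a combination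
of the others, so the `q^n` distinct linear forms are roots of `D` and the monic `f_n` of degree
`q^n` divides `D`. Hence `D = (-1)^n Δ_{n,n} f_n`, and comparing the coefficients of `X^{q^i}`
gives the identity.
-/

open Polynomial Matrix

theorem Fin.val_succAbove {n : ℕ} (i : Fin (n + 1)) (r : Fin n) :
    (i.succAbove r : ℕ) = if (r : ℕ) < i then (r : ℕ) else r + 1 := by
  rcases lt_or_ge (r : ℕ) i with h | h
  · rw [Fin.succAbove_of_castSucc_lt _ _ h, if_pos h, Fin.val_castSucc]
  · rw [Fin.succAbove_of_le_castSucc _ _ h, if_neg h.not_gt, Fin.val_succ]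

namespace Polynomial

variable {S : Type*} [CommRing S]

theorem prod_X_sub_C_dvd_of_isRoot_s3 [IsDomain S] {ι : Type*} [Fintype ι] {a : ι → S}
    (ha : Function.Injective a) {g : S[X]} (hg : ∀ i, g.IsRoot (a i)) :
    ∏ i, (X - C (a i)) ∣ g := by
  rcases eq_or_ne g 0 with rfl | hg0
  · exact dvd_zero _
  have hle : Finset.univ.val.map a ≤ g.roots := by
    rw [Multiset.le_iff_subset (Finset.univ.nodup.map ha)]
    intro b hb
    obtain ⟨i, -, rfl⟩ := Multiset.mem_map.1 hb
    exact (mem_roots hg0).2 (hg i)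
  have := (Multiset.prod_X_sub_C_dvd_iff_le_roots hg0 _).2 hle
  rwa [Multiset.map_map] at this

theorem eq_C_coeff_mul_of_monic_dvd {f g : S[X]} (hf : f.Monic) (hfg : f ∣ g)
    (hg : g.natDegree ≤ f.natDegree) : g = C (g.coeff f.natDegree) * f := by
  obtain ⟨h, rfl⟩ := hfg
  rcases eq_or_ne h 0 with rfl | hh
  · simp
  have hh0 : h.natDegree = 0 := by
    rw [hf.natDegree_mul' hh] at hg
    omega
  rw [eq_C_of_natDegree_eq_zero hh0, coeff_mul_C, hf.coeff_natDegree, one_mul, mul_comm]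

end Polynomial

namespace FiniteField

variable (K : Type*) [Field K] [Fintype K] {S : Type*} [CommRing S] [Algebra K S]

theorem sum_smul_pow_card_pow_s3 {ι : Type*} (s : Finset ι) (k : ι → K) (x : ι → S) (r : ℕ) :
    (∑ c ∈ s, k c • x c) ^ Fintype.card K ^ r =
      ∑ c ∈ s, k c • x c ^ Fintype.card K ^ r := by
  have hfrob : ∀ y : S, (frobeniusAlgHom K S ^ r) y = y ^ Fintype.card K ^ r := fun y => by
    rw [AlgHom.coe_pow, coe_frobeniusAlgHom, pow_iterate]
  simp only [← hfrob, map_sum, map_smul]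

end FiniteField

section Moore

variable {S : Type*} [CommRing S] {n : ℕ}

noncomputable def mooreMatrixX (q : ℕ) (x : Fin n → S) :
    Matrix (Fin (n + 1)) (Fin (n + 1)) S[X] :=
  of fun r => Fin.cons (X ^ q ^ (r : ℕ)) fun c => C (x c ^ q ^ (r : ℕ))

/-- The minor of the Moore matrix `(x_c ^ q ^ r)_{0 ≤ r ≤ n}` obtained by deleting row `i`. -/
noncomputable def mooreMinor (q : ℕ) (x : Fin n → S) (i : ℕ) : S :=
  det (of fun r c : Fin n => x c ^ q ^ (if (r : ℕ) < i then (r : ℕ) else r + 1))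

theorem det_mooreMatrixX_eq_sum (q : ℕ) (x : Fin n → S) :
    det (mooreMatrixX q x) =
      ∑ i : Fin (n + 1), C ((-1) ^ (i : ℕ) * mooreMinor q x i) * X ^ q ^ (i : ℕ) := by
  rw [det_succ_column_zero]
  refine Finset.sum_congr rfl fun i _ => ?_
  have hminor :
      det ((mooreMatrixX q x).submatrix i.succAbove Fin.succ) = C (mooreMinor q x i) := by
    rw [mooreMinor, RingHom.map_det]
    congr 1
    ext r c : 1
    simp [mooreMatrixX, Fin.val_succAbove, apply_ite C]
  rw [hminor, map_mul, map_pow, map_neg, map_one]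
  simp only [mooreMatrixX, of_apply, Fin.cons_zero]
  ring

theorem coeff_det_mooreMatrixX {q : ℕ} (hq : 1 < q) (x : Fin n → S) (i : Fin (n + 1)) :
    (det (mooreMatrixX q x)).coeff (q ^ (i : ℕ)) = (-1) ^ (i : ℕ) * mooreMinor q x i := by
  simp only [det_mooreMatrixX_eq_sum, finsetSum_coeff, coeff_C_mul_X_pow,
    (Nat.pow_right_injective hq).eq_iff, Fin.val_inj, Finset.sum_ite_eq, Finset.mem_univ, if_true]

theorem natDegree_det_mooreMatrixX_le {q : ℕ} (hq : 0 < q) (x : Fin n → S) :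
    (det (mooreMatrixX q x)).natDegree ≤ q ^ n := by
  rw [det_mooreMatrixX_eq_sum]
  refine natDegree_sum_le_of_forall_le _ _ fun i _ => (natDegree_C_mul_X_pow_le _ _).trans ?_
  exact Nat.pow_le_pow_right hq (Nat.lt_succ_iff.1 i.isLt)

theorem eval_det_mooreMatrixX_eq_zero {q : ℕ} {x : Fin n → S} {y : S} (a : Fin n → S)
    (hy : ∀ r : ℕ, y ^ q ^ r = ∑ c, a c * x c ^ q ^ r) :
    (det (mooreMatrixX q x)).eval y = 0 := by
  rw [← coe_evalRingHom, RingHom.map_det]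
  set M := (evalRingHom y).mapMatrix (mooreMatrixX q x)
  have hcol :
      M.updateCol 0 (fun r => ∑ c, (Fin.cons 0 a : Fin (n + 1) → S) c • M r c) = M := by
    ext r c
    refine Fin.cases ?_ (fun c => by simp) c
    simp [M, mooreMatrixX, Fin.sum_univ_succ, hy]
  rw [← hcol, det_updateCol_sum, Fin.cons_zero, zero_smul]

end Moore

section SubspacePolynomial

variable {S : Type*} [CommRing S] [IsDomain S] {n : ℕ} (K : Type*) [Field K] [Fintype K]
  [Algebra K S] {x : Fin n → S}

noncomputable def subspacePolynomial (x : Fin n → S) : S[X] :=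
  ∏ k : Fin n → K, (X - C (∑ c, k c • x c))

theorem det_mooreMatrixX_eq_C_mul_subspacePolynomial (hx : LinearIndependent K x) :
    det (mooreMatrixX (Fintype.card K) x) =
      C ((-1) ^ n * mooreMinor (Fintype.card K) x n) * subspacePolynomial K x := by
  have hf : (subspacePolynomial K x).Monic := monic_prod_of_monic _ _ fun k _ => monic_X_sub_C _
  have hdeg : (subspacePolynomial K x).natDegree = Fintype.card K ^ n := by
    rw [subspacePolynomial, natDegree_prod_of_monic _ _ fun k _ => monic_X_sub_C _]
    simp only [natDegree_X_sub_C, Finset.sum_const, Finset.card_univ, Fintype.card_fun,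
      Fintype.card_fin, smul_eq_mul, mul_one]
  have hroots (k : Fin n → K) :
      (det (mooreMatrixX (Fintype.card K) x)).IsRoot (∑ c, k c • x c) :=
    eval_det_mooreMatrixX_eq_zero (fun c => algebraMap K S (k c)) fun r => by
      rw [FiniteField.sum_smul_pow_card_pow_s3]
      simp only [Algebra.smul_def]
  have hinj : Function.Injective fun k : Fin n → K => ∑ c, k c • x c := fun k k' h =>
    funext (Fintype.linearIndependent_iffₛ.1 hx k k' h)
  have hdvd : subspacePolynomial K x ∣ det (mooreMatrixX (Fintype.card K) x) :=
    prod_X_sub_C_dvd_of_isRoot_s3 hinj hroots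
  have hlead := coeff_det_mooreMatrixX (Fintype.one_lt_card (α := K)) x (Fin.last n)
  rw [Fin.val_last] at hlead
  rw [eq_C_coeff_mul_of_monic_dvd hf hdvd
    (hdeg ▸ natDegree_det_mooreMatrixX_le Fintype.card_pos x), hdeg, hlead]

theorem mooreMinor_eq_mooreMinor_mul_coeff_subspacePolynomial (hx : LinearIndependent K x)
    {i : ℕ} (hi : i ≤ n) :
    mooreMinor (Fintype.card K) x i = mooreMinor (Fintype.card K) x n *
      ((-1) ^ (n + i) * (subspacePolynomial K x).coeff (Fintype.card K ^ i)) := by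
  have hcoeff := congrArg (coeff · (Fintype.card K ^ i))
    (det_mooreMatrixX_eq_C_mul_subspacePolynomial K hx)
  rw [coeff_det_mooreMatrixX Fintype.one_lt_card _ ⟨i, Nat.lt_succ_of_le hi⟩, coeff_C_mul]
    at hcoeff
  calc mooreMinor _ x i = (-1) ^ i * ((-1) ^ i * mooreMinor (Fintype.card K) x i) := by
        rw [← mul_assoc, ← mul_pow, neg_one_mul, neg_neg, one_pow, one_mul]
    _ = _ := by
        rw [hcoeff]
        ring

end SubspacePolynomial

theorem DeltaMinor_eq_DeltaMinor_mul_dicksonC_general (p m n : ℕ) [Fact p.Prime]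
    [Fintype (GaloisField p m)] (hm : 1 ≤ m) :
    ∀ i ≤ n,
      DeltaMinor p m n i = DeltaMinor p m n n * dicksonC p m n i ∧
        DeltaMinor p m n n ∣ DeltaMinor p m n i := by
  intro i hi
  have hq : Fintype.card (GaloisField p m) = p ^ m := by
    rw [← Nat.card_eq_fintype_card, GaloisField.card p m (by omega)]
  have hF : subspacePolynomial (GaloisField p m) MvPolynomial.X = dicksonF p m n := by
    simp only [subspacePolynomial, dicksonF, MvPolynomial.smul_eq_C_mul]
  have hΔ : DeltaMinor p m n = mooreMinor (p ^ m) MvPolynomial.X := rfl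
  have key : DeltaMinor p m n i = DeltaMinor p m n n * dicksonC p m n i := by
    have h := mooreMinor_eq_mooreMinor_mul_coeff_subspacePolynomial (GaloisField p m)
      (MvPolynomial.linearIndependent_X (Fin n) (GaloisField p m)) hi
    rwa [hF, hq, ← hΔ] at h
  exact ⟨key, Dvd.intro _ key.symm⟩

/-- for every `0 ≤ i ≤ n`, `Δ_{n,i} = Δ_{n,n} · C_{n,i}` in
`R = F_q[x_1,…,x_n]`; in particular `Δ_{n,n} ∣ Δ_{n,i}`. -/
theorem DeltaMinor_eq_DeltaMinor_mul_dicksonC (p m n : ℕ) [Fact p.Prime]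
    [Fintype (GaloisField p m)] (hm : 1 ≤ m) (hn : 1 ≤ n) :
    ∀ i ≤ n,
      DeltaMinor p m n i = DeltaMinor p m n n * dicksonC p m n i ∧
        DeltaMinor p m n n ∣ DeltaMinor p m n i :=
  DeltaMinor_eq_DeltaMinor_mul_dicksonC_general p m n hm
end

section
/- The Dickson invariants C_{n,0}, C_{n,1}, …, C_{n,n−1} are algebraically independent over F_q in the polynomial ring R = F_q[x_1,…,x_n]. -/
open Polynomial

namespace MvPolynomial

variable {R A σ : Type*} [CommSemiring R] [CommSemiring A] [Algebra R A]

theorem aeval_monomial_eq_multiset_prod (y : σ → A) (a : σ →₀ ℕ) (r : R) :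
    aeval y (monomial a r) = algebraMap R A r * (a.toMultiset.map y).prod := by
  rw [aeval_monomial, Finsupp.toMultiset_map, Finsupp.prod_toMultiset,
    Finsupp.prod_mapDomain_index (fun _ => pow_zero _) (fun _ _ _ => pow_add _ _ _)]

theorem IsHomogeneous.aeval_const_mul {Q : MvPolynomial σ R} {d : ℕ} (hQ : Q.IsHomogeneous d)
    (ε : A) (c : σ → A) :
    MvPolynomial.aeval (fun i => ε * c i) Q = ε ^ d * MvPolynomial.aeval c Q := by
  conv_lhs => rw [Q.as_sum]
  conv_rhs => rw [Q.as_sum]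
  simp only [map_sum, Finset.mul_sum, aeval_monomial_eq_multiset_prod]
  refine Finset.sum_congr rfl fun a ha => ?_
  have hcard : Multiset.card a.toMultiset = d := by
    simp [hQ.degree_eq_sum_deg_support ha, Finsupp.sum]
  rw [Multiset.prod_map_mul, Multiset.map_const', Multiset.prod_replicate, hcard]
  ring

variable {n : ℕ}

theorem aeval_snoc_X_one_monomial (a : Fin (n + 1) →₀ ℕ) (r : R) :
    aeval (Fin.snoc X 1 : Fin (n + 1) → MvPolynomial (Fin n) R) (monomial a r) =
      monomial (a.comapDomain Fin.castSucc (Fin.castSucc_injective n).injOn) r := by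
  rw [aeval_monomial, monomial_eq, Finsupp.prod_pow, Finsupp.prod_pow, Fin.prod_univ_castSucc]
  simp [Finsupp.comapDomain_apply]

theorem IsHomogeneous.eq_zero_of_aeval_snoc_X_one {Q : MvPolynomial (Fin (n + 1)) R} {d : ℕ}
    (hQ : Q.IsHomogeneous d)
    (h : MvPolynomial.aeval (Fin.snoc X 1 : Fin (n + 1) → MvPolynomial (Fin n) R) Q = 0) :
    Q = 0 := by
  have hinit : ∀ a ∈ Q.support, ∀ b ∈ Q.support,
      a.comapDomain Fin.castSucc (Fin.castSucc_injective n).injOn =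
        b.comapDomain Fin.castSucc (Fin.castSucc_injective n).injOn → a = b := by
    intro a ha b hb hab
    have hsum : ∀ c ∈ Q.support, c (Fin.last n) + ∑ i : Fin n, c i.castSucc = d :=
      fun c hc => by
      rw [add_comm, ← Fin.sum_univ_castSucc (f := fun i => c i), ← Finsupp.degree_eq_sum,
        Finsupp.degree_apply, hQ.degree_eq_sum_deg_support hc]
    have hcast : ∀ i : Fin n, a i.castSucc = b i.castSucc := fun i =>
      DFunLike.congr_fun hab i
    have hlast := (hsum a ha).trans (hsum b hb).symm
    simp only [hcast] at hlast
    ext i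
    induction i using Fin.lastCases with
    | last => omega
    | cast i => exact hcast i
  ext a
  rw [coeff_zero]
  by_contra hne
  have ha : a ∈ Q.support := mem_support_iff.2 hne
  have key : coeff (a.comapDomain Fin.castSucc (Fin.castSucc_injective n).injOn)
      (MvPolynomial.aeval (Fin.snoc X 1 : Fin (n + 1) → MvPolynomial (Fin n) R) Q) =
        coeff a Q := by
    conv_lhs => rw [Q.as_sum]
    simp only [map_sum, coeff_sum, aeval_snoc_X_one_monomial, coeff_monomial]
    rw [Finset.sum_eq_single a (fun b hb hba => if_neg fun h => hba (hinit b hb a ha h))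
      (fun h => absurd ha h), if_pos rfl]
  rw [h, coeff_zero] at key
  exact hne key.symm

theorem coeff_aeval_monomial_of_natDegree_le {y : σ → A[X]} {D d : ℕ} (hD : 0 < D)
    (hy : ∀ i, (y i).natDegree ≤ D) {a : σ →₀ ℕ} (ha : a.degree ≤ d) (r : R) :
    (aeval y (monomial a r)).coeff (d * D) =
      if a.degree = d then aeval (fun i => (y i).coeff D) (monomial a r) else 0 := by
  have hcard : Multiset.card (a.toMultiset.map y) = a.degree := by
    simp [Finsupp.degree_apply, Finsupp.sum]
  have hle : ∀ p ∈ a.toMultiset.map y, p.natDegree ≤ D := by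
    simp only [Multiset.mem_map]
    rintro _ ⟨i, -, rfl⟩
    exact hy i
  rw [aeval_monomial_eq_multiset_prod, Polynomial.algebraMap_apply, Polynomial.coeff_C_mul]
  split_ifs with hd
  · rw [← hd, ← hcard, coeff_multiset_prod_of_natDegree_le _ _ hle,
      aeval_monomial_eq_multiset_prod, Multiset.map_map]
    rfl
  · rw [Polynomial.coeff_eq_zero_of_natDegree_lt, mul_zero]
    calc _ ≤ ((a.toMultiset.map y).map natDegree).sum := natDegree_multiset_prod_le _
      _ ≤ Multiset.card ((a.toMultiset.map y).map natDegree) • D :=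
          Multiset.sum_le_card_nsmul _ D fun _ hx => by
            obtain ⟨p, hp, rfl⟩ := Multiset.mem_map.1 hx
            exact hle p hp
      _ < d * D := by
          rw [Multiset.card_map, hcard, smul_eq_mul]
          exact Nat.mul_lt_mul_of_pos_right (lt_of_le_of_ne ha hd) hD

theorem coeff_aeval_eq_aeval_homogeneousComponent {y : σ → A[X]} {D d : ℕ} (hD : 0 < D)
    (hy : ∀ i, (y i).natDegree ≤ D) {P : MvPolynomial σ R} (hP : P.totalDegree ≤ d) :
    (aeval y P).coeff (d * D) =
      aeval (fun i => (y i).coeff D) (homogeneousComponent d P) := by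
  conv_lhs => rw [P.as_sum]
  rw [map_sum, finsetSum_coeff, homogeneousComponent_apply, map_sum, Finset.sum_filter]
  refine Finset.sum_congr rfl fun a ha => ?_
  exact coeff_aeval_monomial_of_natDegree_le hD hy ((le_totalDegree ha).trans hP) _

theorem homogeneousComponent_totalDegree_ne_zero {P : MvPolynomial σ R} (hP : P ≠ 0) :
    homogeneousComponent P.totalDegree P ≠ 0 := by
  obtain ⟨a, ha, hdeg⟩ := Finset.exists_mem_eq_sup P.support (support_nonempty.2 hP)
    fun s => s.sum fun _ e => e
  intro h
  have h := congrArg (coeff a) h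
  rw [coeff_homogeneousComponent, if_pos, coeff_zero] at h
  · exact mem_support_iff.1 ha h
  · rw [totalDegree, hdeg, Finsupp.degree_apply, Finsupp.sum]

end MvPolynomial

open MvPolynomial in
theorem algebraicIndependent_of_coeff_eq_const_mul {R A : Type*} [CommRing R] [CommRing A]
    [IsDomain A] [Algebra R A] {n D : ℕ} (hD : 0 < D) {y : Fin (n + 1) → A[X]}
    {c : Fin (n + 1) → A} {ε : A} (hε : ε ≠ 0) (hy : ∀ i, (y i).natDegree ≤ D)
    (hcoeff : ∀ i, (y i).coeff D = ε * c i) (hlast : c (Fin.last n) = 1)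
    (hc : AlgebraicIndependent R fun i : Fin n => c i.castSucc) :
    AlgebraicIndependent R y := by
  rw [algebraicIndependent_iff]
  intro P hP
  by_contra hP0
  set Q := homogeneousComponent P.totalDegree P
  have hQc : aeval c Q = 0 := by
    have h := coeff_aeval_eq_aeval_homogeneousComponent hD hy (le_refl P.totalDegree)
    simp only [hcoeff, (homogeneousComponent_isHomogeneous _ P).aeval_const_mul, hP,
      Polynomial.coeff_zero] at h
    exact (mul_eq_zero.1 h.symm).resolve_left (pow_ne_zero _ hε)
  have hsnoc : (fun i => aeval (fun j : Fin n => c j.castSucc)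
      ((Fin.snoc X 1 : Fin (n + 1) → MvPolynomial (Fin n) R) i)) = c := by
    funext i
    induction i using Fin.lastCases with
    | last => simp [hlast]
    | cast j => simp
  have hQ : aeval (Fin.snoc X 1 : Fin (n + 1) → MvPolynomial (Fin n) R) Q = 0 :=
    algebraicIndependent_iff.1 hc _ (by rw [comp_aeval_apply, hsnoc, hQc])
  exact homogeneousComponent_totalDegree_ne_zero hP0
    ((homogeneousComponent_isHomogeneous _ P).eq_zero_of_aeval_snoc_X_one hQ)

namespace Polynomial.Bivariate

variable {R : Type*} [CommSemiring R]

theorem coeff_coeff_swap (p : R[X][X])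
    (i j : ℕ) : ((swap p).coeff i).coeff j = (p.coeff j).coeff i := by
  induction p using Polynomial.induction_on' with
  | add p q hp hq => simp only [map_add, Polynomial.coeff_add, hp, hq]
  | monomial k a =>
    induction a using Polynomial.induction_on' with
    | add a b ha hb => simp only [map_add, Polynomial.coeff_add, ha, hb]
    | monomial l r =>
      simp only [swap_monomial_monomial, Polynomial.coeff_monomial]
      split_ifs <;> simp [Polynomial.coeff_monomial, *]

theorem natDegree_coeff_le_natDegree_swap (p : R[X][X]) (j : ℕ) :
    (p.coeff j).natDegree ≤ (swap p).natDegree :=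
  natDegree_le_iff_coeff_eq_zero.2 fun k hk => by
    rw [← coeff_coeff_swap, coeff_eq_zero_of_natDegree_lt hk, coeff_zero]

theorem coeff_coeff_natDegree_swap (p : R[X][X]) (j : ℕ) :
    (p.coeff j).coeff (swap p).natDegree = (swap p).leadingCoeff.coeff j :=
  (coeff_coeff_swap p _ j).symm

end Polynomial.Bivariate

section ProdLinear

variable {R ι : Type*} [CommRing R] [IsDomain R] (s : Finset ι) (a b : ι → R)

theorem Polynomial.natDegree_prod_linear (ha : ∀ i ∈ s, a i ≠ 0) :
    (∏ i ∈ s, (C (a i) * X + C (b i))).natDegree = s.card := by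
  have hne : ∀ i ∈ s, C (a i) * X + C (b i) ≠ 0 := fun i hi =>
    ne_zero_of_natDegree_gt (n := 0) (by rw [natDegree_linear (ha i hi)]; exact one_pos)
  rw [natDegree_prod _ _ hne, Finset.card_eq_sum_ones]
  exact Finset.sum_congr rfl fun i hi => natDegree_linear (ha i hi)

theorem Polynomial.leadingCoeff_prod_linear (ha : ∀ i ∈ s, a i ≠ 0) :
    (∏ i ∈ s, (C (a i) * X + C (b i))).leadingCoeff = ∏ i ∈ s, a i := by
  rw [leadingCoeff_prod]
  exact Finset.prod_congr rfl fun i hi => leadingCoeff_linear (ha i hi)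

end ProdLinear

noncomputable def linearForm {R : Type*} [CommSemiring R] {n : ℕ} (k : Fin n → R) :
    MvPolynomial (Fin n) R :=
  ∑ i, MvPolynomial.C (k i) * MvPolynomial.X i

theorem finSuccEquiv_linearForm {R : Type*} [CommSemiring R] {n : ℕ} (k : Fin (n + 1) → R) :
    MvPolynomial.finSuccEquiv R n (linearForm k) =
      Polynomial.C (MvPolynomial.C (k 0)) * X + Polynomial.C (linearForm (Fin.tail k)) := by
  simp only [linearForm, map_sum, Fin.sum_univ_succ, map_add, map_mul,
    MvPolynomial.finSuccEquiv_X_zero, MvPolynomial.finSuccEquiv_X_succ,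
    ← MvPolynomial.algebraMap_eq, AlgEquiv.commutes, Polynomial.algebraMap_apply, Fin.tail]

section DicksonInvariants

variable (K : Type*) [Field K] [Fintype K]

noncomputable def prodLinearForms (n : ℕ) : (MvPolynomial (Fin n) K)[X] :=
  ∏ k : Fin n → K, (X - Polynomial.C (linearForm k))

noncomputable def dicksonInvariant (n i : ℕ) : MvPolynomial (Fin n) K :=
  (-1) ^ (n + i) * (prodLinearForms K n).coeff (Fintype.card K ^ i)

variable {K}

theorem monic_prodLinearForms (n : ℕ) : (prodLinearForms K n).Monic :=
  monic_prod_of_monic _ _ fun _ _ => monic_X_sub_C _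

theorem natDegree_prodLinearForms (n : ℕ) :
    (prodLinearForms K n).natDegree = Fintype.card K ^ n := by
  rw [prodLinearForms, natDegree_prod_of_monic _ _ fun _ _ => monic_X_sub_C _]
  simp

theorem dicksonInvariant_self (n : ℕ) : dicksonInvariant K n n = 1 := by
  rw [dicksonInvariant, ← natDegree_prodLinearForms, (monic_prodLinearForms n).coeff_natDegree,
    ← two_mul, pow_mul]
  simp

/-- After `swap`, the outer variable is `x_0` and the inner one is the variable `X` of `f_n`. -/
theorem swap_map_prodLinearForms_succ (n : ℕ) :
    Bivariate.swap (mapAlgEquiv (MvPolynomial.finSuccEquiv K n) (prodLinearForms K (n + 1))) =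
      ∏ c : K, ∏ v : Fin n → K,
        (Polynomial.C (Polynomial.C (MvPolynomial.C (-c))) * X +
          Polynomial.C (X - Polynomial.C (linearForm v))) := by
  have hfactor : ∀ k : Fin (n + 1) → K,
      Bivariate.swap
          (mapAlgEquiv (MvPolynomial.finSuccEquiv K n) (X - Polynomial.C (linearForm k))) =
        Polynomial.C (Polynomial.C (MvPolynomial.C (-k 0))) * X +
          Polynomial.C (X - Polynomial.C (linearForm (Fin.tail k))) := by
    intro k
    simp only [coe_mapAlgEquiv, Polynomial.map_X, Polynomial.map_C, RingHom.coe_coe,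
      finSuccEquiv_linearForm, map_sub, map_add, map_mul, Bivariate.swap_X, Bivariate.swap_Y,
      Bivariate.swap_C_C, map_neg]
    ring
  rw [prodLinearForms, map_prod, map_prod, Fintype.prod_congr _ _ hfactor,
    ← Fintype.prod_prod_type']
  exact Fintype.prod_equiv (Fin.consEquiv fun _ => K).symm _ _ fun k => rfl

theorem finSuccEquiv_coeff_prodLinearForms_succ (n : ℕ) :
    ∃ e : K, e ≠ 0 ∧ ∀ j,
      (MvPolynomial.finSuccEquiv K n ((prodLinearForms K (n + 1)).coeff j)).natDegree ≤
          (Fintype.card K - 1) * Fintype.card K ^ n ∧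
        (MvPolynomial.finSuccEquiv K n ((prodLinearForms K (n + 1)).coeff j)).coeff
          ((Fintype.card K - 1) * Fintype.card K ^ n) =
            MvPolynomial.C e * (prodLinearForms K n).coeff j := by
  classical
  set s := (Finset.univ.erase (0 : K)) ×ˢ (Finset.univ : Finset (Fin n → K))
  have hs : ∀ x ∈ s,
      (Polynomial.C (MvPolynomial.C (-x.1)) : (MvPolynomial (Fin n) K)[X]) ≠ 0 := by
    simp [s]
  set G := mapAlgEquiv (MvPolynomial.finSuccEquiv K n) (prodLinearForms K (n + 1))
  have hsplit : Bivariate.swap G = Polynomial.C (prodLinearForms K n) *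
      ∏ x ∈ s, (Polynomial.C (Polynomial.C (MvPolynomial.C (-x.1))) * X +
        Polynomial.C (X - Polynomial.C (linearForm x.2))) := by
    rw [swap_map_prodLinearForms_succ, ← Finset.mul_prod_erase _ _ (Finset.mem_univ 0),
      Finset.prod_product]
    simp [prodLinearForms]
  have hGdeg : (Bivariate.swap G).natDegree = (Fintype.card K - 1) * Fintype.card K ^ n := by
    rw [hsplit, natDegree_C_mul (monic_prodLinearForms n).ne_zero, natDegree_prod_linear _ _ _ hs]
    simp [s, Finset.card_erase_of_mem]
  have hGlead : (Bivariate.swap G).leadingCoeff =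
      Polynomial.C (MvPolynomial.C (∏ x ∈ s, -x.1)) * prodLinearForms K n := by
    rw [hsplit, leadingCoeff_mul, leadingCoeff_C, leadingCoeff_prod_linear _ _ _ hs, mul_comm]
    simp
  have hGcoeff : ∀ j,
      G.coeff j = MvPolynomial.finSuccEquiv K n ((prodLinearForms K (n + 1)).coeff j) := fun j => by
    simp [G, coe_mapAlgEquiv]
  refine ⟨∏ x ∈ s, -x.1, Finset.prod_ne_zero_iff.2 (by simp [s]), fun j => ⟨?_, ?_⟩⟩
  · rw [← hGcoeff, ← hGdeg]
    exact Bivariate.natDegree_coeff_le_natDegree_swap G j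
  · rw [← hGcoeff, ← hGdeg, Bivariate.coeff_coeff_natDegree_swap, hGlead, coeff_C_mul]

theorem finSuccEquiv_dicksonInvariant_succ (n : ℕ) :
    ∃ ε : MvPolynomial (Fin n) K, ε ≠ 0 ∧ ∀ i,
      (MvPolynomial.finSuccEquiv K n (dicksonInvariant K (n + 1) i)).natDegree ≤
          (Fintype.card K - 1) * Fintype.card K ^ n ∧
        (MvPolynomial.finSuccEquiv K n (dicksonInvariant K (n + 1) i)).coeff
          ((Fintype.card K - 1) * Fintype.card K ^ n) = ε * dicksonInvariant K n i := by
  obtain ⟨e, he, hcoeff⟩ := finSuccEquiv_coeff_prodLinearForms_succ (K := K) n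
  refine ⟨-MvPolynomial.C e, by simpa using he, fun i => ?_⟩
  obtain ⟨hdeg, hlead⟩ := hcoeff (Fintype.card K ^ i)
  have hsign : MvPolynomial.finSuccEquiv K n ((-1) ^ (n + 1 + i)) =
      Polynomial.C ((-1) ^ (n + 1 + i)) := by
    simp
  rw [dicksonInvariant, map_mul, hsign]
  refine ⟨(natDegree_C_mul_le _ _).trans hdeg, ?_⟩
  rw [coeff_C_mul, hlead, dicksonInvariant, add_right_comm, pow_succ]
  ring

end DicksonInvariants

theorem algebraicIndependent_dicksonInvariant (K : Type*) [Field K] [Fintype K] (n : ℕ) :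
    AlgebraicIndependent K fun i : Fin n => dicksonInvariant K n i := by
  induction n with
  | zero => exact algebraicIndependent_empty_type
  | succ n ih =>
    obtain ⟨ε, hε, hy⟩ := finSuccEquiv_dicksonInvariant_succ (K := K) n
    refine AlgebraicIndependent.of_comp (MvPolynomial.finSuccEquiv K n).toAlgHom
      (algebraicIndependent_of_coeff_eq_const_mul ?_ hε (fun i => (hy i).1) (fun i => (hy i).2)
        (dicksonInvariant_self n) ih)
    have hq := Fintype.one_lt_card (α := K)
    exact Nat.mul_pos (Nat.sub_pos_of_lt hq) (pow_pos (zero_lt_one.trans hq) n)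

theorem dicksonC_eq_dicksonInvariant (p m n : ℕ) [Fact p.Prime] [Fintype (GaloisField p m)]
    (hm : m ≠ 0) (i : ℕ) : dicksonC p m n i = dicksonInvariant (GaloisField p m) n i := by
  rw [dicksonInvariant, ← Nat.card_eq_fintype_card, GaloisField.card p m hm]
  rfl

theorem dicksonC_algebraicIndependent_general (p m n : ℕ) [Fact p.Prime]
    [Fintype (GaloisField p m)] (hm : 1 ≤ m) :
    AlgebraicIndependent (GaloisField p m)
      (fun i : Fin n => dicksonC p m n (i : ℕ)) := by
  simpa only [dicksonC_eq_dicksonInvariant p m n (Nat.one_le_iff_ne_zero.1 hm)] using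
    algebraicIndependent_dicksonInvariant (GaloisField p m) n

/-- the Dickson invariants `C_{n,0}, …, C_{n,n−1}` are algebraically
independent over `F_q` in `R = F_q[x_1,…,x_n]`. -/
theorem dicksonC_algebraicIndependent (p m n : ℕ) [Fact p.Prime]
    [Fintype (GaloisField p m)] (hm : 1 ≤ m) (hn : 1 ≤ n) :
    AlgebraicIndependent (GaloisField p m)
      (fun i : Fin n => dicksonC p m n (i : ℕ)) :=
  dicksonC_algebraicIndependent_general p m n hm
end

section
/- For every g ∈ GL_n(F_q) and every 0 ≤ i ≤ n, the linear substitution action of g on R = F_q[x_1,…,x_n] fixes the Dickson invariant C_{n,i}; that is, each C_{n,i} is a GL_n(F_q)-invariant polynomial. -/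
namespace MvPolynomial

open Matrix

variable {K σ τ : Type*} [Fintype σ] [Fintype τ]

theorem aeval_sum_C_mul_X_eq_mulVec [CommSemiring K] (A : Matrix τ σ K) (k : σ → K) :
    aeval (fun i => ∑ j, C (A j i) * X j) (∑ i, C (k i) * X i : MvPolynomial σ K) =
      ∑ j, C ((A *ᵥ k) j) * X j := by
  simp only [map_sum, map_mul, aeval_C, aeval_X, algebraMap_eq, mulVec, dotProduct,
    Finset.mul_sum, Finset.sum_mul]
  rw [Finset.sum_comm]
  refine Finset.sum_congr rfl fun j _ => Finset.sum_congr rfl fun i _ => ?_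
  ring

theorem map_aeval_prod_X_sub_C_linearForm [CommRing K] [Fintype K] [DecidableEq σ]
    (g : GL σ K) :
    (∏ k : σ → K, (Polynomial.X - Polynomial.C (∑ i, C (k i) * X i))).map
        (aeval fun i => ∑ j, C ((g : Matrix σ σ K) j i) * X j).toRingHom =
      ∏ k : σ → K, (Polynomial.X - Polynomial.C (∑ i, C (k i) * X i)) := by
  simp only [Polynomial.map_prod, Polynomial.map_sub, Polynomial.map_X, Polynomial.map_C,
    AlgHom.toRingHom_eq_coe, RingHom.coe_coe, aeval_sum_C_mul_X_eq_mulVec]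
  exact Fintype.prod_equiv (GeneralLinearGroup.toLin g).toLinearEquiv.toEquiv _ _ fun _ => rfl

end MvPolynomial

theorem dicksonC_invariant_general (p m n : ℕ) [Fact p.Prime]
    [Fintype (GaloisField p m)] :
    ∀ g : GL (Fin n) (GaloisField p m), ∀ i ≤ n,
      MvPolynomial.aeval
        (fun i : Fin n =>
          ∑ j : Fin n,
            MvPolynomial.C ((g : Matrix (Fin n) (Fin n) (GaloisField p m)) j i) *
              MvPolynomial.X j) (dicksonC p m n i) = dicksonC p m n i := by
  intro g i _
  have hF := MvPolynomial.map_aeval_prod_X_sub_C_linearForm g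
  rw [dicksonC, map_mul, map_pow, map_neg, map_one, ← AlgHom.coe_toRingHom,
    ← Polynomial.coeff_map]
  exact congrArg (fun f => (-1) ^ (n + i) * Polynomial.coeff f ((p ^ m) ^ i)) hF

/-- for every `g ∈ GL_n(F_q)` and every `0 ≤ i ≤ n`, the linear
substitution action of `g` (sending `x_i ↦ Σ_j g_{ji} x_j`) fixes the Dickson
invariant `C_{n,i}`. -/
theorem dicksonC_invariant (p m n : ℕ) [Fact p.Prime]
    [Fintype (GaloisField p m)] (hm : 1 ≤ m) (hn : 1 ≤ n) :
    ∀ g : GL (Fin n) (GaloisField p m), ∀ i ≤ n,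
      MvPolynomial.aeval
        (fun i : Fin n =>
          ∑ j : Fin n,
            MvPolynomial.C ((g : Matrix (Fin n) (Fin n) (GaloisField p m)) j i) *
              MvPolynomial.X j) (dicksonC p m n i) = dicksonC p m n i :=
  dicksonC_invariant_general p m n
end

section
/- In the polynomial ring F_p[ξ_1,η_1,…,ξ_l,η_l], the 2l polynomials r_i := Σ_{j=1}^{l} (ξ_j^{p^i} η_j − ξ_j η_j^{p^i}), for 1 ≤ i ≤ 2l, are algebraically independent over F_p. -/
/-!
Differentiating a relation `P(r) = 0` gives `∑ᵢ (∂ᵢP)(r) · ∂ᵥ rᵢ = 0` for every variable `v`.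
Since `p ∣ p^i`, the Jacobian of the `rᵢ` is, up to swapping `ξⱼ ↔ ηⱼ` and signs, the Moore
matrix `(u^{p^{i+1}})` of the `2l` variables `u`. Its rows are independent: the additive
polynomial `∑ᵢ cᵢ Y^{p^i}` has degree `< p^{2l}` but vanishes on the `p^{2l}` elements of the
`𝔽_p`-span of the `u^p`. So every `∂ᵢP` is a relation of smaller degree, hence zero by
induction, which makes `P = Q^p`; then `Q(r)^p = 0` and `Q` is a relation of smaller degree.
-/

open Polynomial in
theorem linearIndependent_moore {p : ℕ} [Fact p.Prime] {R σ : Type*} [CommRing R] [IsDomain R]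
    [Algebra (ZMod p) R] [Fintype σ] {x : σ → R} (hx : LinearIndependent (ZMod p) x) {n : ℕ}
    (hn : n ≤ Fintype.card σ) :
    LinearIndependent R fun (i : Fin n) (u : σ) => x u ^ p ^ (i : ℕ) := by
  classical
  have hp := (Fact.out : p.Prime)
  have : CharP R p := charP_of_injective_algebraMap' (ZMod p) p
  rw [Fintype.linearIndependent_iff]
  intro c hc i
  set G : R[X] := ∑ j, C (c j) * X ^ p ^ (j : ℕ)
  have hroot (u : σ) : G.eval (x u) = 0 := by
    simpa [G, eval_finsetSum] using congrFun hc u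
  have hspan (a : σ → ZMod p) : G.eval (∑ u, a u • x u) = 0 := by
    have hfrob (j : ℕ) : (∑ u, a u • x u) ^ p ^ j = ∑ u, a u • x u ^ p ^ j := by
      simp only [sum_pow_char_pow, _root_.smul_pow, ZMod.pow_card_pow]
    simp only [G, eval_finsetSum, eval_mul, eval_C, eval_pow, eval_X, hfrob, Finset.mul_sum]
    rw [Finset.sum_comm]
    refine Finset.sum_eq_zero fun u _ => ?_
    simpa [mul_smul_comm, ← Finset.smul_sum, G, eval_finsetSum] using
      congrArg (a u • ·) (hroot u)
  have hdeg : G.natDegree < Fintype.card (σ → ZMod p) := by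
    rw [Fintype.card_fun, ZMod.card]
    refine lt_of_le_of_lt (natDegree_sum_le_of_forall_le _ _ fun j _ => ?_)
      (Nat.pow_lt_pow_right hp.one_lt (by have := i.2; omega : n - 1 < Fintype.card σ))
    exact (natDegree_C_mul_X_pow_le _ _).trans (Nat.pow_le_pow_right hp.pos (by omega))
  have hG : G = 0 := eq_zero_of_natDegree_lt_card_of_eval_eq_zero G
    (linearIndependent_iff_injective_fintypeLinearCombination.mp hx) hspan hdeg
  have hcoeff := congrArg (coeff · (p ^ (i : ℕ))) hG
  simpa [G, finsetSum_coeff, coeff_C_mul_X_pow, (Nat.pow_right_injective hp.two_le).eq_iff,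
    Fin.val_inj] using hcoeff

namespace MvPolynomial

section CommSemiring

variable {R σ : Type*} [CommSemiring R]

theorem pderiv_aeval {ι : Type*} [Fintype ι] [DecidableEq ι] [DecidableEq σ]
    (r : ι → MvPolynomial σ R) (P : MvPolynomial ι R) (v : σ) :
    pderiv v (aeval r P) = ∑ i, aeval r (pderiv i P) * pderiv v (r i) := by
  induction P using MvPolynomial.induction_on with
  | C a => simp
  | add f g hf hg => simp only [map_add, hf, hg, add_mul, Finset.sum_add_distrib]
  | mul_X f n hf =>
    have hterm (i : ι) : aeval r (pderiv i (f * X n)) * pderiv v (r i) =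
        aeval r (pderiv i f) * pderiv v (r i) * r n +
          if n = i then aeval r f * pderiv v (r n) else 0 := by
      rw [pderiv_mul, pderiv_X, Pi.single_apply]
      split_ifs with h
      · subst h; simp only [map_add, map_mul, aeval_X, map_one]; ring
      · simp only [map_add, map_mul, aeval_X, map_zero]; ring
    rw [Finset.sum_congr rfl fun i _ => hterm i, Finset.sum_add_distrib, ← Finset.sum_mul, ← hf,
      Finset.sum_ite_eq, if_pos (Finset.mem_univ n), map_mul, aeval_X, pderiv_mul]

theorem totalDegree_pderiv_lt [DecidableEq σ] {P : MvPolynomial σ R} (hP : 0 < P.totalDegree)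
    (i : σ) : (pderiv i P).totalDegree < P.totalDegree := by
  refine (Finset.sup_lt_iff hP).mpr fun m hm => ?_
  rw [mem_support_iff, coeff_pderiv] at hm
  have := le_totalDegree (mem_support_iff.mpr (left_ne_zero_of_mul hm))
  rw [Finsupp.sum_add_index' (fun _ => rfl) (fun _ _ _ => rfl),
    Finsupp.sum_single_index rfl] at this
  omega

theorem dvd_of_forall_pderiv_eq_zero [NoZeroDivisors R] (p : ℕ) [CharP R p] [DecidableEq σ]
    {P : MvPolynomial σ R} (h : ∀ i, pderiv i P = 0) {d : σ →₀ ℕ} (hd : d ∈ P.support)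
    (i : σ) : p ∣ d i := by
  obtain hdi | hdi := eq_or_ne (d i) 0
  · simp [hdi]
  have hsub : d - Finsupp.single i 1 + Finsupp.single i 1 = d :=
    tsub_add_cancel_of_le (Finsupp.single_le_iff.mpr (Nat.one_le_iff_ne_zero.mpr hdi))
  have := coeff_pderiv (i := i) P (d - Finsupp.single i 1)
  rw [h, coeff_zero, hsub, eq_comm, mul_eq_zero, or_iff_right (mem_support_iff.mp hd)] at this
  rwa [Finsupp.tsub_apply, Finsupp.single_eq_same, ← Nat.cast_add_one, Nat.sub_one_add_one hdi,
    CharP.cast_eq_zero_iff R p] at this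

theorem exists_expand_eq_of_forall_dvd {p : ℕ} {P : MvPolynomial σ R}
    (h : ∀ d ∈ P.support, ∀ i, p ∣ d i) : ∃ Q, expand p Q = P := by
  refine ⟨∑ d ∈ P.support, monomial (d ⌊/⌋ p) (coeff d P), ?_⟩
  conv_rhs => rw [← support_sum_monomial_coeff P]
  refine (map_sum _ _ _).trans (Finset.sum_congr rfl fun d hd => ?_)
  rw [expand_monomial]
  congr
  ext i
  simp [Nat.floorDiv_eq_div, Nat.mul_div_cancel' (h d hd i)]

theorem linearIndependent_X_pow {n : ℕ} (hn : n ≠ 0) :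
    LinearIndependent R fun i : σ => (X i : MvPolynomial σ R) ^ n := by
  simpa [Function.comp_def, X_pow_eq_monomial] using
    (basisMonomials σ R).linearIndependent.comp _ (Finsupp.single_left_injective hn)

end CommSemiring

theorem pderiv_sum_X_pow_mul_X_sub {R ι : Type*} [CommRing R] [Fintype ι] [DecidableEq ι]
    {q : ℕ} (hq : (q : R) = 0) (j : ι) (k : Fin 2) :
    pderiv (j, k) (∑ j', (X (j', 0) ^ q * X (j', 1) - X (j', 0) * X (j', 1) ^ q :
      MvPolynomial (ι × Fin 2) R)) = if k = 1 then X (j, 0) ^ q else -X (j, 1) ^ q := by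
  have hq' : (q : MvPolynomial (ι × Fin 2) R) = 0 := by
    rw [← map_natCast C, hq, C_0]
  rw [map_sum, Finset.sum_eq_single j (fun j' _ hj' => by simp [hj']) (by simp)]
  fin_cases k <;> simp [hq']

theorem algebraicIndependent_of_linearIndependent_pderiv {p : ℕ} [Fact p.Prime] {ι σ : Type*}
    [Fintype ι] [DecidableEq ι] [DecidableEq σ] {r : ι → MvPolynomial σ (ZMod p)}
    (hr : LinearIndependent (MvPolynomial σ (ZMod p)) fun i v => pderiv v (r i)) :
    AlgebraicIndependent (ZMod p) r := by
  have hp := (Fact.out : p.Prime)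
  rw [algebraicIndependent_iff]
  intro P hP
  induction hN : P.totalDegree using Nat.strong_induction_on generalizing P with
  | _ N IH =>
    rcases N.eq_zero_or_pos with rfl | hN0
    · rw [totalDegree_eq_zero_iff_eq_C.mp hN] at hP ⊢
      rw [aeval_C, algebraMap_eq, C_eq_zero] at hP
      rw [hP, C_0]
    have hpderiv_aeval (i : ι) : aeval r (pderiv i P) = 0 := by
      refine Fintype.linearIndependent_iff.mp hr (fun i => aeval r (pderiv i P)) ?_ i
      ext1 v
      simp only [Finset.sum_apply, Pi.smul_apply, smul_eq_mul, Pi.zero_apply]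
      rw [← pderiv_aeval, hP, map_zero]
    have hpderiv (i : ι) : pderiv i P = 0 :=
      IH _ (hN ▸ totalDegree_pderiv_lt (hN ▸ hN0) i) _ (hpderiv_aeval i) rfl
    obtain ⟨Q, rfl⟩ :=
      exists_expand_eq_of_forall_dvd fun _ hd => dvd_of_forall_pderiv_eq_zero p hpderiv hd
    rw [← frobenius_zmod, frobenius_def] at hP ⊢
    have hQ : aeval r Q = 0 := pow_eq_zero_iff hp.ne_zero |>.mp (by rwa [← map_pow])
    have hdeg : Q.totalDegree < N := by
      rw [← hN, totalDegree_expand] at hN0 ⊢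
      nlinarith [hp.two_le]
    rw [IH _ hdeg Q hQ rfl, zero_pow hp.ne_zero]

end MvPolynomial

theorem r_algebraicIndependent_general (p l : ℕ) [Fact p.Prime] :
    AlgebraicIndependent (ZMod p)
      (fun i : Fin (2 * l) =>
        ∑ j : Fin l,
          ((MvPolynomial.X (j, 0)) ^ p ^ ((i : ℕ) + 1) * MvPolynomial.X (j, 1) -
              MvPolynomial.X (j, 0) * (MvPolynomial.X (j, 1)) ^ p ^ ((i : ℕ) + 1) :
            MvPolynomial (Fin l × Fin 2) (ZMod p))) := by
  have hp := (Fact.out : p.Prime)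
  have hmoore := Fintype.linearIndependent_iff.mp <|
    linearIndependent_moore (MvPolynomial.linearIndependent_X_pow (R := ZMod p)
      (σ := Fin l × Fin 2) hp.ne_zero) (n := 2 * l) (by simp [mul_comm])
  refine MvPolynomial.algebraicIndependent_of_linearIndependent_pderiv <|
    Fintype.linearIndependent_iff.mpr fun c hc i => hmoore c (funext fun ⟨j, k⟩ => ?_) i
  have hq (i : Fin (2 * l)) : ((p ^ ((i : ℕ) + 1) : ℕ) : ZMod p) = 0 := by simp
  -- `1 - k` swaps `ξⱼ` and `ηⱼ`
  have hrow := congrFun hc (j, 1 - k)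
  simp only [Finset.sum_apply, Pi.smul_apply, smul_eq_mul, Pi.zero_apply,
    MvPolynomial.pderiv_sum_X_pow_mul_X_sub (hq _)] at hrow
  fin_cases k <;> simpa [← pow_mul, ← pow_succ'] using hrow

/-- in the polynomial ring `F_p[ξ_1,η_1,…,ξ_l,η_l]` (variables indexed
by `Fin l × Fin 2`, with `X (j,0) = ξ_j` and `X (j,1) = η_j`), the `2l` polynomials
`r_i = Σ_{j=1}^{l} (ξ_j^{p^i} η_j − ξ_j η_j^{p^i})`, `1 ≤ i ≤ 2l`, are algebraically
independent over `F_p`. -/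
theorem r_algebraicIndependent (p l : ℕ) [Fact p.Prime] (hodd : Odd p) (hl : 1 ≤ l) :
    AlgebraicIndependent (ZMod p)
      (fun i : Fin (2 * l) =>
        ∑ j : Fin l,
          ((MvPolynomial.X (j, 0)) ^ p ^ ((i : ℕ) + 1) * MvPolynomial.X (j, 1) -
              MvPolynomial.X (j, 0) * (MvPolynomial.X (j, 1)) ^ p ^ ((i : ℕ) + 1) :
            MvPolynomial (Fin l × Fin 2) (ZMod p))) :=
  r_algebraicIndependent_general p l
end

section
/- For every 0 ≤ j ≤ 4, one has the identity R_j(r_1, r_2, r_3, r_4) = Δ_{4,j}(η_1, ξ_1, η_2, ξ_2) in the polynomial ring F_p[η_1, ξ_1, η_2, ξ_2]. -/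
open MvPolynomial

/-- The polynomials `R_0, …, R_4 ∈ F_p[Y_1,Y_2,Y_3,Y_4]` (with `Y_i = X (i-1)`). -/
noncomputable def Rpoly (p : ℕ) : ℕ → MvPolynomial (Fin 4) (ZMod p)
  | 0 => X 0 ^ (p ^ 3 + p) - X 1 ^ (p ^ 2 + p) + X 0 ^ p ^ 2 * X 2 ^ p
  | 1 => X 0 ^ p ^ 3 * X 1 - X 1 ^ p ^ 2 * X 2 + X 0 ^ p ^ 2 * X 3
  | 2 => X 0 ^ (p ^ 3 + 1) - X 2 ^ (p + 1) + X 1 ^ p * X 3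
  | 3 => X 0 * X 1 ^ p ^ 2 - X 1 * X 2 ^ p + X 0 ^ p * X 3
  | _ => X 0 ^ (p ^ 2 + 1) - X 1 ^ (p + 1) + X 0 ^ p * X 2

/-- In `F_p[η_1, ξ_1, η_2, ξ_2]` (variables `X 0 = η_1`, `X 1 = ξ_1`, `X 2 = η_2`,
`X 3 = ξ_2`), the element `r_i = ξ_1^{p^i} η_1 − ξ_1 η_1^{p^i} + ξ_2^{p^i} η_2 − ξ_2 η_2^{p^i}`. -/
noncomputable def rElt (p i : ℕ) : MvPolynomial (Fin 4) (ZMod p) :=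
  X 1 ^ p ^ i * X 0 - X 1 * X 0 ^ p ^ i + X 3 ^ p ^ i * X 2 - X 3 * X 2 ^ p ^ i

/-- `Δ_{4,j}(η_1, ξ_1, η_2, ξ_2)`: the determinant of the `4×4` matrix whose columns
correspond to the variables `(η_1, ξ_1, η_2, ξ_2)` (i.e. `X c`), whose rows are
indexed by `r ∈ {0,…,4} \ {j}` (in increasing order), with entry `z^{p^r}` in the
column of the variable `z`. -/
noncomputable def Delta4 (p : ℕ) (j : ℕ) : MvPolynomial (Fin 4) (ZMod p) :=
  Matrix.det (Matrix.of fun r c : Fin 4 =>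
    (X c : MvPolynomial (Fin 4) (ZMod p)) ^
      p ^ (if (r : ℕ) < j then (r : ℕ) else (r : ℕ) + 1))

/-!
Write `v_r = (η_1^{p^r}, ξ_1^{p^r}, η_2^{p^r}, ξ_2^{p^r})` for the rows of the Moore matrix and `ω` for
the standard symplectic form on `R^4`. Then `r_i = ω(v_0, v_i)`, and since Frobenius is a ring
endomorphism, `r_i^{p^k} = ω(v_k, v_{i+k})`. Each monomial of `R_j(r_1, …, r_4)` thus becomes a
product `ω(v_a, v_b) ω(v_c, v_d)`, and `R_j(r_1, …, r_4)` is the Pfaffian of the Gram matrix of the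
four rows `v_r`, `r ≠ j`. For four vectors in a symplectic space of dimension `4` this Pfaffian is
their determinant, which is `Δ_{4,j}`.
-/

section Symplectic

variable {R : Type*} [CommRing R]

def symplecticForm (u v : Fin 4 → R) : R :=
  u 0 * v 1 - u 1 * v 0 + u 2 * v 3 - u 3 * v 2

theorem Matrix.det_of_fin_four_eq_pfaffian (v : Fin 4 → Fin 4 → R) :
    (Matrix.of v).det =
      symplecticForm (v 0) (v 1) * symplecticForm (v 2) (v 3)
        - symplecticForm (v 0) (v 2) * symplecticForm (v 1) (v 3)
        + symplecticForm (v 0) (v 3) * symplecticForm (v 1) (v 2) := by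
  simp [Matrix.det_succ_row_zero, Fin.sum_univ_succ, Fin.succAbove, symplecticForm]
  ring

theorem symplecticForm_pow_char_pow (p : ℕ) [Fact p.Prime] [CharP R p] (u v : Fin 4 → R)
    (k : ℕ) : symplecticForm u v ^ p ^ k = symplecticForm (u ^ p ^ k) (v ^ p ^ k) := by
  simp [symplecticForm, sub_pow_char_pow, add_pow_char_pow, mul_pow]

end Symplectic

section MooreRows

variable {R : Type*} [CommRing R]

def frobRow (q : ℕ) (x : Fin 4 → R) (r : ℕ) : Fin 4 → R :=
  fun c => x c ^ q ^ r

theorem frobRow_pow (q : ℕ) (x : Fin 4 → R) (r k : ℕ) :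
    frobRow q x r ^ q ^ k = frobRow q x (r + k) := by
  ext c
  simp [frobRow, ← pow_mul, ← pow_add]

theorem symplecticForm_frobRow_pow_char_pow (p : ℕ) [Fact p.Prime] [CharP R p]
    (x : Fin 4 → R) (a b k : ℕ) :
    symplecticForm (frobRow p x a) (frobRow p x b) ^ p ^ k =
      symplecticForm (frobRow p x (a + k)) (frobRow p x (b + k)) := by
  rw [symplecticForm_pow_char_pow, frobRow_pow, frobRow_pow]

theorem symplecticForm_frobRow_pow_char (p : ℕ) [Fact p.Prime] [CharP R p]
    (x : Fin 4 → R) (a b : ℕ) :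
    symplecticForm (frobRow p x a) (frobRow p x b) ^ p =
      symplecticForm (frobRow p x (a + 1)) (frobRow p x (b + 1)) := by
  simpa using symplecticForm_frobRow_pow_char_pow p x a b 1

end MooreRows

theorem rElt_eq_symplecticForm (p i : ℕ) :
    rElt p i = symplecticForm (frobRow p X 0) (frobRow p X i) := by
  simp only [rElt, symplecticForm, frobRow, pow_zero, pow_one]
  ring

theorem Delta4_eq_det_frobRow (p j : ℕ) :
    Delta4 p j = (Matrix.of fun r : Fin 4 =>
      frobRow p X (if (r : ℕ) < j then (r : ℕ) else (r : ℕ) + 1)).det :=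
  rfl

theorem Rpoly_eval_eq_Delta4_general (p : ℕ) [Fact p.Prime] :
    ∀ j ≤ 4,
      MvPolynomial.aeval (fun i : Fin 4 => rElt p ((i : ℕ) + 1)) (Rpoly p j) =
        Delta4 p j := by
  intro j hj
  interval_cases j <;>
  · rw [Delta4_eq_det_frobRow, Matrix.det_of_fin_four_eq_pfaffian]
    simp only [Rpoly, map_add, map_sub, map_mul, map_pow, aeval_X, pow_add, pow_one,
      rElt_eq_symplecticForm, symplecticForm_frobRow_pow_char_pow,
      symplecticForm_frobRow_pow_char]
    norm_num
    ring

/-- for every `0 ≤ j ≤ 4`,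
`R_j(r_1, r_2, r_3, r_4) = Δ_{4,j}(η_1, ξ_1, η_2, ξ_2)` in `F_p[η_1, ξ_1, η_2, ξ_2]`. -/
theorem Rpoly_eval_eq_Delta4 (p : ℕ) [Fact p.Prime] (hodd : Odd p) :
    ∀ j ≤ 4,
      MvPolynomial.aeval (fun i : Fin 4 => rElt p ((i : ℕ) + 1)) (Rpoly p j) =
        Delta4 p j :=
  Rpoly_eval_eq_Delta4_general p
end
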